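/- Let M be a real n_B × n_A matrix with local bound C = max over A ∈ {−1,1}^{n_A} of ∑_i |∑_x M_{ix} A_x|. Suppose for each of N sources k there are measurable functions λ_k ↦ A^k_x(λ_k) ∈ [−1,1] and λ⃗ ↦ B_i(λ⃗) ∈ [−1,1], and probability measures q_k, and define I_i = ∫ (∏_{k=1}^N ∑_x M_{ix} A^k_x(λ_k)) B_i(λ⃗) ∏_k dq_k(λ_k). Then ∑_{i=1}^{n_B} |I_i|^{1/N} ≤ C. -/

import Mathlib

/-!
Since `a ↦ ∑ i, |∑ x, M i x * a x|` is convex and the cube `[-1, 1]^nA` is the convex hull of the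
sign vectors, the local bound `C` holds on the whole cube; integrating against `q k` gives
`∑ i, J i k ≤ C` for `J i k = ∫ |∑ x, M i x * A k x| ∂q k`. As `|B i| ≤ 1` and the measure is a
product, `|I i| ≤ ∏ k, J i k`. Hölder's inequality for `N` sequences with exponents `1 / N` then gives
`∑ i, ∏ k, (J i k) ^ (1 / N) ≤ ∏ k, (∑ i, J i k) ^ (1 / N) ≤ C`.
-/

open MeasureTheory Set Finset Matrix

theorem ConvexOn.le_of_forall_sign {ι : Type*} [Finite ι] {f : (ι → ℝ) → ℝ} {C : ℝ}
    (hf : ConvexOn ℝ univ f) (hC : ∀ a : ι → ℝ, (∀ x, a x = 1 ∨ a x = -1) → f a ≤ C)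
    {a : ι → ℝ} (ha : ∀ x, |a x| ≤ 1) : f a ≤ C := by
  have hmem : a ∈ convexHull ℝ (univ.pi fun _ => ({-1, 1} : Set ℝ)) := by
    rw [convexHull_pi, convexHull_pair, segment_eq_Icc (by norm_num)]
    exact fun x _ => abs_le.1 (ha x)
  obtain ⟨b, hb, hab⟩ := hf.exists_ge_of_mem_convexHull (subset_univ _) hmem
  exact hab.trans (hC b fun x => by simpa [or_comm] using hb x (mem_univ x))

theorem convexOn_sum_abs_mulVec {ι κ : Type*} [Fintype ι] [Fintype κ] (M : Matrix κ ι ℝ) :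
    ConvexOn ℝ univ fun a : ι → ℝ => ∑ i, |∑ x, M i x * a x| := by
  have h := Finset.sum_induction (s := Finset.univ) (fun i (a : ι → ℝ) => |(M *ᵥ a) i|)
    (ConvexOn ℝ univ) (fun _ _ => ConvexOn.add) (convexOn_const 0 convex_univ)
    (fun i _ => convexOn_univ_norm.comp_linearMap ((LinearMap.proj i).comp M.mulVecLin))
  simpa only [Finset.sum_fn, mulVec, dotProduct] using h

theorem Real.sum_prod_rpow_le_prod_sum_rpow {ι κ : Type*} [Fintype ι] (s : Finset κ)
    (t : ι → κ → ℝ) (ht : ∀ i k, 0 ≤ t i k) {w : κ → ℝ} (hw : ∑ k ∈ s, w k = 1)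
    (hw₀ : ∀ k ∈ s, 0 ≤ w k) :
    ∑ i, ∏ k ∈ s, t i k ^ w k ≤ ∏ k ∈ s, (∑ i, t i k) ^ w k := by
  let _ : MeasurableSpace ι := ⊤
  have holder := ENNReal.lintegral_prod_norm_pow_le (μ := Measure.count) s
    (f := fun k i => ENNReal.ofReal (t i k)) (fun _ _ => (measurable_of_countable _).aemeasurable)
    hw hw₀
  simp only [lintegral_count, tsum_fintype] at holder
  have hpow (i k) : 0 ≤ t i k ^ w k := Real.rpow_nonneg (ht i k) _
  have hsum (k) : 0 ≤ ∑ i, t i k := Finset.sum_nonneg fun i _ => ht i k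
  rw [← ENNReal.ofReal_le_ofReal_iff (Finset.prod_nonneg fun k _ => Real.rpow_nonneg (hsum k) _)]
  convert holder using 1
  · rw [ENNReal.ofReal_sum_of_nonneg fun i _ => Finset.prod_nonneg fun k _ => hpow i k]
    refine Finset.sum_congr rfl fun i _ => ?_
    rw [ENNReal.ofReal_prod_of_nonneg fun k _ => hpow i k]
    exact Finset.prod_congr rfl fun k hk => (ENNReal.ofReal_rpow_of_nonneg (ht i k) (hw₀ k hk)).symm
  · rw [ENNReal.ofReal_prod_of_nonneg fun k _ => Real.rpow_nonneg (hsum k) _]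
    refine Finset.prod_congr rfl fun k hk => ?_
    rw [← ENNReal.ofReal_rpow_of_nonneg (hsum k) (hw₀ k hk),
      ENNReal.ofReal_sum_of_nonneg fun i _ => ht i k]

theorem abs_integral_prod_mul_le_prod_integral_abs {ι : Type*} [Fintype ι] {Λ : ι → Type*}
    [∀ k, MeasurableSpace (Λ k)] (q : ∀ k, Measure (Λ k)) [∀ k, SigmaFinite (q k)]
    {f : ∀ k, Λ k → ℝ} (hf : ∀ k, Integrable (f k) (q k)) {g : (∀ k, Λ k) → ℝ}
    (hg : ∀ l, |g l| ≤ 1) :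
    |∫ l, (∏ k, f k (l k)) * g l ∂Measure.pi q| ≤ ∏ k, ∫ y, |f k y| ∂q k := by
  have hint : Integrable (fun l : ∀ k, Λ k => ∏ k, |f k (l k)|) (Measure.pi q) :=
    Integrable.fintype_prod_dep fun k => (hf k).abs
  calc |∫ l, (∏ k, f k (l k)) * g l ∂Measure.pi q|
      ≤ ∫ l, |(∏ k, f k (l k)) * g l| ∂Measure.pi q := abs_integral_le_integral_abs
    _ ≤ ∫ l, ∏ k, |f k (l k)| ∂Measure.pi q := by
        refine integral_mono_of_nonneg (.of_forall fun _ => abs_nonneg _) hint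
          (.of_forall fun l => ?_)
        dsimp only
        rw [abs_mul, Finset.abs_prod]
        exact mul_le_of_le_one_right (Finset.prod_nonneg fun k _ => abs_nonneg _) (hg l)
    _ = ∏ k, ∫ y, |f k y| ∂q k := integral_fintype_prod_eq_prod fun k y => |f k y|

section LocalBound

variable {ι κ Λ : Type*} [Fintype ι] [Fintype κ] [MeasurableSpace Λ] {μ : Measure Λ}
  [IsProbabilityMeasure μ] {a : ι → Λ → ℝ}

theorem integrable_sum_mul_of_abs_le_one (ha : ∀ x, Measurable (a x))
    (ha_le : ∀ x l, |a x l| ≤ 1) (m : ι → ℝ) :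
    Integrable (fun l => ∑ x, m x * a x l) μ :=
  integrable_finsetSum _ fun x _ =>
    ((Integrable.of_bound (ha x).aestronglyMeasurable 1 (.of_forall (ha_le x))).const_mul (m x))

theorem sum_integral_abs_le_of_abs_le_one (M : Matrix κ ι ℝ) {C : ℝ}
    (hC : ∀ s : ι → ℝ, (∀ x, s x = 1 ∨ s x = -1) → ∑ i, |∑ x, M i x * s x| ≤ C)
    (ha : ∀ x, Measurable (a x)) (ha_le : ∀ x l, |a x l| ≤ 1) :
    ∑ i, ∫ l, |∑ x, M i x * a x l| ∂μ ≤ C := by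
  have hint (i) := (integrable_sum_mul_of_abs_le_one (μ := μ) ha ha_le (M i)).abs
  rw [← integral_finsetSum _ fun i _ => hint i]
  calc ∫ l, ∑ i, |∑ x, M i x * a x l| ∂μ ≤ ∫ _, C ∂μ :=
        integral_mono (integrable_finsetSum _ fun i _ => hint i) (integrable_const C)
          fun l => (convexOn_sum_abs_mulVec M).le_of_forall_sign hC fun x => ha_le x l
    _ = C := by simp

end LocalBound

theorem stmt_3_general (N nA nB : ℕ) (hN : 1 ≤ N)
    (M : Fin nB → Fin nA → ℝ) (C : ℝ)
    (hC : IsGreatest {S : ℝ | ∃ A : Fin nA → ℝ,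
        (∀ x, A x = 1 ∨ A x = -1) ∧
        S = ∑ i : Fin nB, |∑ x : Fin nA, M i x * A x|} C)
    (Λ : Fin N → Type) [∀ k, MeasurableSpace (Λ k)]
    (q : ∀ k, Measure (Λ k)) [∀ k, IsProbabilityMeasure (q k)]
    (A : ∀ k : Fin N, Fin nA → Λ k → ℝ)
    (B : Fin nB → (∀ k, Λ k) → ℝ)
    (hAm : ∀ k x, Measurable (A k x))
    (hAb : ∀ k x lam, |A k x lam| ≤ 1)
    (hBb : ∀ i lam, |B i lam| ≤ 1)
    (I : Fin nB → ℝ)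
    (hI : ∀ i, I i = ∫ lam, (∏ k : Fin N, ∑ x : Fin nA, M i x * A k x (lam k)) *
        B i lam ∂(Measure.pi q)) :
    ∑ i : Fin nB, |I i| ^ (1 / (N : ℝ)) ≤ C := by
  have hvertex (s : Fin nA → ℝ) (hs : ∀ x, s x = 1 ∨ s x = -1) :
      ∑ i, |∑ x, M i x * s x| ≤ C := hC.2 ⟨s, hs, rfl⟩
  have hC₀ : 0 ≤ C := (sum_nonneg fun i _ => abs_nonneg _).trans (hvertex 1 fun _ => Or.inl rfl)
  set J : Fin nB → Fin N → ℝ := fun i k => ∫ l, |∑ x, M i x * A k x l| ∂q k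
  have hJ₀ (i k) : 0 ≤ J i k := integral_nonneg fun _ => abs_nonneg _
  have hw : ∑ _k : Fin N, 1 / (N : ℝ) = 1 := by
    rw [sum_const, card_univ, Fintype.card_fin, nsmul_eq_mul, mul_one_div_cancel]
    positivity
  calc ∑ i, |I i| ^ (1 / (N : ℝ)) ≤ ∑ i, ∏ k, J i k ^ (1 / (N : ℝ)) := by
        gcongr with i
        rw [Real.finsetProd_rpow _ _ fun k _ => hJ₀ i k, hI i]
        gcongr
        exact abs_integral_prod_mul_le_prod_integral_abs q
          (fun k => integrable_sum_mul_of_abs_le_one (hAm k) (hAb k) (M i)) (hBb i)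
    _ ≤ ∏ k, (∑ i, J i k) ^ (1 / (N : ℝ)) :=
        Real.sum_prod_rpow_le_prod_sum_rpow _ J hJ₀ hw fun _ _ => by positivity
    _ ≤ ∏ _k : Fin N, C ^ (1 / (N : ℝ)) := by
        gcongr with k
        exact sum_integral_abs_le_of_abs_le_one M hvertex (hAm k) (hAb k)
    _ = C := by
        rw [prod_const, card_univ, Fintype.card_fin, one_div, Real.rpow_inv_natCast_pow hC₀ (by omega)]

theorem stmt_3 (N nA nB : ℕ) (hN : 1 ≤ N)
    (M : Fin nB → Fin nA → ℝ) (C : ℝ)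
    (hC : IsGreatest {S : ℝ | ∃ A : Fin nA → ℝ,
        (∀ x, A x = 1 ∨ A x = -1) ∧
        S = ∑ i : Fin nB, |∑ x : Fin nA, M i x * A x|} C)
    (Λ : Fin N → Type) [∀ k, MeasurableSpace (Λ k)]
    (q : ∀ k, Measure (Λ k)) [∀ k, IsProbabilityMeasure (q k)]
    (A : ∀ k : Fin N, Fin nA → Λ k → ℝ)
    (B : Fin nB → (∀ k, Λ k) → ℝ)
    (hAm : ∀ k x, Measurable (A k x))
    (hBm : ∀ i, Measurable (B i))
    (hAb : ∀ k x lam, |A k x lam| ≤ 1)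
    (hBb : ∀ i lam, |B i lam| ≤ 1)
    (I : Fin nB → ℝ)
    (hI : ∀ i, I i = ∫ lam, (∏ k : Fin N, ∑ x : Fin nA, M i x * A k x (lam k)) *
        B i lam ∂(Measure.pi q)) :
    ∑ i : Fin nB, |I i| ^ (1 / (N : ℝ)) ≤ C :=
  stmt_3_general N nA nB hN M C hC Λ q A B hAm hAb hBb I hI
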